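/- arXiv:1908.04019 — 4 statements merged into one kernel-verified Lean document; each statement's English description precedes it below -/
import Mathlib

section
/- Let α be a measurable space, d ≥ 1 an integer, τ : α → α a measurable bijection with measurable inverse, ψ : α → ℤ^d a measurable function, and χ : ℤ^d → ℝ an additive group homomorphism. Let μ be a finite measure on α that is (e^{χ∘ψ}, τ)-conformal, i.e. μ(τ(E)) = ∫_E exp(χ(ψ(x))) dμ(x) for every measurable set E ⊆ α. Let m be the Maharam measure on α × ℤ^d determined by m(E × {v}) = e^{−χ(v)} μ(E) for measurable E ⊆ α and v ∈ ℤ^d. Then m(α × {v}) = e^{−χ(v)} μ(α) < ∞ for every v ∈ ℤ^d (so m is locally finite), and m is invariant under the skew product T(x,v) = (τ(x), v + ψ(x)): m(T⁻¹(A)) = m(A) for every measurable A ⊆ α × ℤ^d. -/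
/-! Slicing along the countable coordinate gives `m B = ∑ᵥ e^{-χ v} μ(B_v)`. Split each slice of
`T⁻¹ A` along the level sets `{ψ = u}`: conformality turns `μ({ψ = u} ∩ τ⁻¹ S)` into
`e^{-χ u} μ(S ∩ τ{ψ = u})`, the weights combine to `e^{-χ(w + u)}`, which is exactly what the
translation `w ↦ w + u` of the slice index absorbs, and the sets `τ{ψ = u}` partition `α` again. -/

open MeasureTheory Set

section

variable {α G : Type*}

def skewProduct [Add G] (τ : α → α) (ψ : α → G) (p : α × G) : α × G := (τ p.1, p.2 + ψ p.1)

variable [MeasurableSpace α]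

def IsConformal (μ : Measure α) (τ : α → α) (φ : α → ℝ) : Prop :=
  ∀ E : Set α, MeasurableSet E → μ (τ '' E) = ENNReal.ofReal (∫ x in E, φ x ∂μ)

theorem IsConformal.measure_image_of_eqOn_const {μ : Measure α} [IsFiniteMeasure μ] {τ : α → α}
    {φ : α → ℝ} (h : IsConformal μ τ φ) {E : Set α} (hE : MeasurableSet E) {c : ℝ}
    (hφ : EqOn φ (fun _ => c) E) :
    μ (τ '' E) = ENNReal.ofReal c * μ E := by
  rw [h E hE, setIntegral_congr_fun hE hφ, setIntegral_const, smul_eq_mul,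
    ENNReal.ofReal_mul measureReal_nonneg, ofReal_measureReal, mul_comm]

variable [MeasurableSpace G]

def IsMaharamMeasure (m : Measure (α × G)) (μ : Measure α) (χ : G → ℝ) : Prop :=
  ∀ (E : Set α) (v : G), MeasurableSet E →
    m (E ×ˢ ({v} : Set G)) = ENNReal.ofReal (Real.exp (-(χ v))) * μ E

variable [MeasurableSingletonClass G]

theorem IsConformal.measure_preimage_inter_preimage_singleton {μ : Measure α} [IsFiniteMeasure μ]
    {τ τinv : α → α} {ψ : α → G} {χ : G → ℝ} (hconf : IsConformal μ τ fun x => Real.exp (χ (ψ x)))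
    (hτ : Measurable τ) (hleft : Function.LeftInverse τinv τ)
    (hright : Function.RightInverse τinv τ) (hψ : Measurable ψ) {S : Set α} (hS : MeasurableSet S)
    (u : G) :
    μ (τ ⁻¹' S ∩ ψ ⁻¹' {u}) = ENNReal.ofReal (Real.exp (-(χ u))) * μ (S ∩ (ψ ∘ τinv) ⁻¹' {u}) := by
  have hE : MeasurableSet (τ ⁻¹' S ∩ ψ ⁻¹' {u}) := (hτ hS).inter (hψ (measurableSet_singleton u))
  have himage : τ '' (τ ⁻¹' S ∩ ψ ⁻¹' {u}) = S ∩ (ψ ∘ τinv) ⁻¹' {u} := by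
    rw [image_eq_preimage_of_inverse hleft hright, preimage_inter, ← preimage_comp,
      hright.comp_eq_id, preimage_id, preimage_comp]
  rw [← himage, hconf.measure_image_of_eqOn_const hE (c := Real.exp (χ u))
      fun x hx => congrArg (fun v => Real.exp (χ v)) hx.2,
    ← mul_assoc, ← ENNReal.ofReal_mul (Real.exp_nonneg _), ← Real.exp_add, neg_add_cancel,
    Real.exp_zero, ENNReal.ofReal_one, one_mul]

variable [Countable G]

theorem measure_eq_tsum_inter_preimage_singleton (μ : Measure α) {f : α → G} (hf : Measurable f)
    {S : Set α} (hS : MeasurableSet S) : μ S = ∑' u, μ (S ∩ f ⁻¹' {u}) := by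
  have hcover : S = ⋃ u, S ∩ f ⁻¹' {u} := by
    rw [← inter_iUnion, iUnion_eq_univ_iff.2 fun x => ⟨f x, rfl⟩, inter_univ]
  conv_lhs => rw [hcover]
  exact measure_iUnion
    ((pairwise_disjoint_fiber f).mono fun _ _ h => h.mono inter_subset_right inter_subset_right)
    fun u => hS.inter (hf (measurableSet_singleton u))

theorem measure_eq_tsum_measure_slice_prod_singleton (m : Measure (α × G)) {B : Set (α × G)}
    (hB : MeasurableSet B) : m B = ∑' v, m ({x | (x, v) ∈ B} ×ˢ {v}) := by
  rw [measure_eq_tsum_inter_preimage_singleton m measurable_snd hB]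
  refine tsum_congr fun v => congrArg m ?_
  ext ⟨x, w⟩
  simp only [mem_inter_iff, mem_preimage, mem_singleton_iff, mem_prod, mem_ofPred_eq]
  constructor <;> rintro ⟨h, rfl⟩ <;> exact ⟨h, rfl⟩

theorem IsMaharamMeasure.apply {m : Measure (α × G)} {μ : Measure α} {χ : G → ℝ}
    (hm : IsMaharamMeasure m μ χ) {B : Set (α × G)} (hB : MeasurableSet B) :
    m B = ∑' v, ENNReal.ofReal (Real.exp (-(χ v))) * μ {x | (x, v) ∈ B} := by
  rw [measure_eq_tsum_measure_slice_prod_singleton m hB]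
  exact tsum_congr fun v => hm _ v (measurable_prodMk_right hB)

theorem measurable_skewProduct [Add G] {τ : α → α} {ψ : α → G} (hτ : Measurable τ)
    (hψ : Measurable ψ) : Measurable (skewProduct τ ψ) :=
  measurable_from_prod_countable_left fun v =>
    hτ.prodMk ((measurable_of_countable (v + ·)).comp hψ)

theorem IsMaharamMeasure.measure_preimage_skewProduct [AddGroup G] {m : Measure (α × G)}
    {μ : Measure α} [IsFiniteMeasure μ] {χ : G →+ ℝ} {τ τinv : α → α} {ψ : α → G}
    (hm : IsMaharamMeasure m μ χ) (hconf : IsConformal μ τ fun x => Real.exp (χ (ψ x)))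
    (hτ : Measurable τ) (hτinv : Measurable τinv) (hleft : Function.LeftInverse τinv τ)
    (hright : Function.RightInverse τinv τ) (hψ : Measurable ψ) {A : Set (α × G)}
    (hA : MeasurableSet A) : m (skewProduct τ ψ ⁻¹' A) = m A := by
  set c : G → ENNReal := fun v => ENNReal.ofReal (Real.exp (-(χ v)))
  have hc : ∀ v w, c v * c w = c (v + w) := fun v w => by
    simp only [c]
    rw [map_add, neg_add, Real.exp_add, ENNReal.ofReal_mul (Real.exp_nonneg _)]
  have hslice : ∀ v, MeasurableSet {x | (x, v) ∈ A} := fun v => measurable_prodMk_right hA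
  have hfiber : ∀ w u, {x | skewProduct τ ψ (x, w) ∈ A} ∩ ψ ⁻¹' {u}
      = τ ⁻¹' {x | (x, w + u) ∈ A} ∩ ψ ⁻¹' {u} := by
    intro w u
    ext x
    simp only [skewProduct, mem_inter_iff, mem_preimage, mem_singleton_iff, mem_ofPred_eq]
    constructor <;> rintro ⟨h, rfl⟩ <;> exact ⟨h, rfl⟩
  calc m (skewProduct τ ψ ⁻¹' A)
      = ∑' w, c w * μ {x | skewProduct τ ψ (x, w) ∈ A} :=
        hm.apply (measurable_skewProduct hτ hψ hA)
    _ = ∑' w, ∑' u, c w * μ (τ ⁻¹' {x | (x, w + u) ∈ A} ∩ ψ ⁻¹' {u}) := by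
        refine tsum_congr fun w => ?_
        rw [measure_eq_tsum_inter_preimage_singleton μ hψ (S := {x | skewProduct τ ψ (x, w) ∈ A})
          (measurable_prodMk_right (measurable_skewProduct hτ hψ hA)), ENNReal.tsum_mul_left]
        simp only [hfiber]
    _ = ∑' w, ∑' u, c (w + u) * μ ({x | (x, w + u) ∈ A} ∩ (ψ ∘ τinv) ⁻¹' {u}) := by
        refine tsum_congr fun w => tsum_congr fun u => ?_
        rw [hconf.measure_preimage_inter_preimage_singleton hτ hleft hright hψ (hslice _), ← mul_assoc, hc]
    _ = ∑' u, ∑' v, c v * μ ({x | (x, v) ∈ A} ∩ (ψ ∘ τinv) ⁻¹' {u}) := by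
        rw [ENNReal.tsum_comm]
        exact tsum_congr fun u =>
          (Equiv.addRight u).tsum_eq fun v => c v * μ ({x | (x, v) ∈ A} ∩ (ψ ∘ τinv) ⁻¹' {u})
    _ = ∑' v, c v * μ {x | (x, v) ∈ A} := by
        rw [ENNReal.tsum_comm]
        refine tsum_congr fun v => ?_
        rw [ENNReal.tsum_mul_left,
          ← measure_eq_tsum_inter_preimage_singleton μ (hψ.comp hτinv) (hslice v)]
    _ = m A := (hm.apply hA).symm

end

theorem maharam_measure_locally_finite_and_invariant_general
    {α : Type*} [MeasurableSpace α] (d : ℕ)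
    (τ τinv : α → α) (hτ : Measurable τ) (hτinv : Measurable τinv)
    (hleft : Function.LeftInverse τinv τ) (hright : Function.RightInverse τinv τ)
    (ψ : α → (Fin d → ℤ)) (hψ : Measurable ψ)
    (χ : (Fin d → ℤ) →+ ℝ)
    (μ : Measure α) [IsFiniteMeasure μ]
    (hconf : ∀ E : Set α, MeasurableSet E →
      μ (τ '' E) = ENNReal.ofReal (∫ x in E, Real.exp (χ (ψ x)) ∂μ))
    (m : Measure (α × (Fin d → ℤ)))
    (hm : ∀ (E : Set α) (v : Fin d → ℤ), MeasurableSet E →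
      m (E ×ˢ ({v} : Set (Fin d → ℤ))) = ENNReal.ofReal (Real.exp (-(χ v))) * μ E) :
    (∀ v : Fin d → ℤ,
      m (Set.univ ×ˢ ({v} : Set (Fin d → ℤ)))
          = ENNReal.ofReal (Real.exp (-(χ v))) * μ Set.univ ∧
      m (Set.univ ×ˢ ({v} : Set (Fin d → ℤ))) < ⊤) ∧
    (∀ A : Set (α × (Fin d → ℤ)), MeasurableSet A →
      m ((fun p : α × (Fin d → ℤ) => (τ p.1, p.2 + ψ p.1)) ⁻¹' A) = m A) := by
  refine ⟨fun v => ?_, fun A hA => ?_⟩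
  · rw [hm univ v MeasurableSet.univ]
    exact ⟨rfl, ENNReal.mul_lt_top ENNReal.ofReal_lt_top (measure_lt_top μ univ)⟩
  · exact IsMaharamMeasure.measure_preimage_skewProduct hm hconf hτ hτinv hleft hright hψ hA

/-- Maharam measures are locally finite (finite on each slice) and invariant
under the skew product `T(x,v) = (τ x, v + ψ x)`. -/
theorem maharam_measure_locally_finite_and_invariant
    {α : Type*} [MeasurableSpace α] (d : ℕ) (hd : 1 ≤ d)
    (τ τinv : α → α) (hτ : Measurable τ) (hτinv : Measurable τinv)
    (hleft : Function.LeftInverse τinv τ) (hright : Function.RightInverse τinv τ)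
    (ψ : α → (Fin d → ℤ)) (hψ : Measurable ψ)
    (χ : (Fin d → ℤ) →+ ℝ)
    (μ : Measure α) [IsFiniteMeasure μ]
    (hconf : ∀ E : Set α, MeasurableSet E →
      μ (τ '' E) = ENNReal.ofReal (∫ x in E, Real.exp (χ (ψ x)) ∂μ))
    (m : Measure (α × (Fin d → ℤ)))
    (hm : ∀ (E : Set α) (v : Fin d → ℤ), MeasurableSet E →
      m (E ×ˢ ({v} : Set (Fin d → ℤ))) = ENNReal.ofReal (Real.exp (-(χ v))) * μ E) :
    (∀ v : Fin d → ℤ,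
      m (Set.univ ×ˢ ({v} : Set (Fin d → ℤ)))
          = ENNReal.ofReal (Real.exp (-(χ v))) * μ Set.univ ∧
      m (Set.univ ×ˢ ({v} : Set (Fin d → ℤ))) < ⊤) ∧
    (∀ A : Set (α × (Fin d → ℤ)), MeasurableSet A →
      m ((fun p : α × (Fin d → ℤ) => (τ p.1, p.2 + ψ p.1)) ⁻¹' A) = m A) :=
  maharam_measure_locally_finite_and_invariant_general d τ τinv hτ hτinv hleft hright ψ hψ χ μ hconf
    m hm
end

section
/- Let (X, 𝒜, μ) be a σ-finite measure space and T : X → X a measurable bijection with measurable inverse that preserves μ. Suppose there exists an increasing sequence (Y_n)_{n≥1} of measurable subsets of X (an almost invariant box sequence) such that X = ⋃_n Y_n, μ(Y_n) < ∞ for every n, and lim_{n→∞} μ(T(Y_n) \ Y_n) = 0. Then T is conservative with respect to μ: for every measurable set s with μ(s) > 0 there exist a point x ∈ s and an integer n ≥ 1 with T^n(x) ∈ s. -/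
/-!
If no point of `s` ever returns to `s`, the forward orbit `W` of `s` is mapped into itself by `T`
and `T '' W` misses `s`. On the finite-measure piece `B = W ∩ Y n` the measure-preserving `T`
therefore pushes a mass of at least `μ (s ∩ B)` out of `B`, all of it into `T '' Y n \ Y n`.
Choosing `N` with `μ (s ∩ Y N) > 0` and `n ≥ N`, we get `μ (s ∩ Y N) ≤ μ (T '' Y n \ Y n)`,
contradicting `μ (T '' Y n \ Y n) → 0`.
-/

open MeasureTheory Filter Set Function

theorem exists_mapsTo_superset_disjoint_image {α : Type*} {f : α → α} {s : Set α}
    (hs : ∀ x ∈ s, ∀ n ≠ 0, f^[n] x ∉ s) :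
    ∃ W, s ⊆ W ∧ MapsTo f W W ∧ Disjoint (f '' W) s := by
  refine ⟨⋃ n, f^[n] '' s, subset_iUnion_of_subset 0 (by simp), ?_, ?_⟩
  · rintro _ ⟨_, ⟨n, rfl⟩, x, hx, rfl⟩
    exact mem_iUnion.2 ⟨n + 1, x, hx, iterate_succ_apply' f n x⟩
  · rw [disjoint_left]
    rintro _ ⟨_, ⟨_, ⟨n, rfl⟩, x, hx, rfl⟩, rfl⟩
    rw [← iterate_succ_apply' f n x]
    exact hs x hx (n + 1) n.succ_ne_zero

namespace MeasureTheory.MeasurePreserving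

variable {X : Type*} [MeasurableSpace X] {μ : Measure X} {e : X ≃ᵐ X}

theorem measure_inter_le_measure_image_sdiff (he : MeasurePreserving e μ μ) {B s : Set X}
    (hs : MeasurableSet s) (hB : μ B ≠ ⊤) (hdisj : Disjoint (e '' B) s) :
    μ (B ∩ s) ≤ μ (e '' B \ B) := by
  have himage : μ (e '' B) = μ B := by
    rw [e.image_eq_preimage_symm]
    exact (he.symm e).measure_preimage_equiv B
  have hstay : e '' B ∩ B ⊆ B \ s := fun x hx => ⟨hx.2, disjoint_left.1 hdisj hx.1⟩
  refine ENNReal.le_of_add_le_add_right (a := μ (B \ s)) (measure_ne_top_of_subset sdiff_subset hB) ?_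
  calc μ (B ∩ s) + μ (B \ s) = μ (e '' B) := by rw [measure_inter_add_sdiff B hs, himage]
    _ ≤ μ (e '' B ∩ B) + μ (e '' B \ B) := measure_le_inter_add_sdiff μ _ _
    _ ≤ μ (e '' B \ B) + μ (B \ s) := by rw [add_comm]; gcongr

theorem conservative_of_tendsto_measure_image_sdiff (he : MeasurePreserving e μ μ)
    {Y : ℕ → Set X} (hYmono : Monotone Y) (hYunion : ⋃ n, Y n = univ)
    (hYfin : ∀ n, μ (Y n) < ⊤) (hYlim : Tendsto (fun n => μ (e '' Y n \ Y n)) atTop (nhds 0)) :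
    Conservative e μ := by
  refine ⟨he.quasiMeasurePreserving, fun s hs hμs => ?_⟩
  by_contra! hs_wandering
  obtain ⟨W, hsW, hWmaps, hWdisj⟩ := exists_mapsTo_superset_disjoint_image hs_wandering
  obtain ⟨N, hN⟩ : ∃ N, μ (s ∩ Y N) ≠ 0 := by
    by_contra! h
    refine hμs (measure_mono_null ?_ (measure_iUnion_null h))
    rw [← inter_iUnion, hYunion, inter_univ]
  obtain ⟨n, hNn, hn⟩ := ((eventually_ge_atTop N).and
    (hYlim.eventually_lt_const (pos_iff_ne_zero.2 hN))).exists
  have hpushed := he.measure_inter_le_measure_image_sdiff hs (B := W ∩ Y n)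
    (measure_ne_top_of_subset inter_subset_right (hYfin n).ne)
    (hWdisj.mono_left (image_mono inter_subset_left))
  refine ((measure_mono ?_).trans (hpushed.trans (measure_mono ?_))).not_gt hn
  · exact fun x hx => ⟨⟨hsW hx.1, hYmono hNn hx.2⟩, hx.1⟩
  · rintro _ ⟨⟨x, hx, rfl⟩, hout⟩
    exact ⟨⟨x, hx.2, rfl⟩, fun h => hout ⟨hWmaps hx.1, h⟩⟩

end MeasureTheory.MeasurePreserving

theorem conservative_of_box_sequence_general
    {X : Type*} [MeasurableSpace X] (μ : Measure X)
    (T S : X → X) (hT : Measurable T) (hS : Measurable S)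
    (hST : Function.LeftInverse S T) (hTS : Function.RightInverse S T)
    (hpres : MeasurePreserving T μ μ)
    (Y : ℕ → Set X) (hYmono : Monotone Y)
    (hYunion : (⋃ n, Y n) = Set.univ) (hYfin : ∀ n, μ (Y n) < ⊤)
    (hYlim : Tendsto (fun n => μ (T '' Y n \ Y n)) atTop (nhds 0)) :
    ∀ s : Set X, MeasurableSet s → 0 < μ s →
      ∃ x ∈ s, ∃ n : ℕ, 1 ≤ n ∧ T^[n] x ∈ s := by
  intro s hs hμs
  let e : X ≃ᵐ X := ⟨⟨T, S, hST, hTS⟩, hT, hS⟩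
  obtain ⟨x, hx, n, hn, hxn⟩ := (hpres.conservative_of_tendsto_measure_image_sdiff (e := e)
    hYmono hYunion hYfin hYlim).exists_mem_iterate_mem' hs hμs.ne'
  exact ⟨x, hx, n, Nat.one_le_iff_ne_zero.2 hn, hxn⟩

/-- Boxes lemma: a measure-preserving bijection admitting an almost invariant
box sequence is conservative. -/
theorem conservative_of_box_sequence
    {X : Type*} [MeasurableSpace X] (μ : Measure X) [SigmaFinite μ]
    (T S : X → X) (hT : Measurable T) (hS : Measurable S)
    (hST : Function.LeftInverse S T) (hTS : Function.RightInverse S T)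
    (hpres : MeasurePreserving T μ μ)
    (Y : ℕ → Set X) (hYmono : Monotone Y) (hYmeas : ∀ n, MeasurableSet (Y n))
    (hYunion : (⋃ n, Y n) = Set.univ) (hYfin : ∀ n, μ (Y n) < ⊤)
    (hYlim : Tendsto (fun n => μ (T '' Y n \ Y n)) atTop (nhds 0)) :
    ∀ s : Set X, MeasurableSet s → 0 < μ s →
      ∃ x ∈ s, ∃ n : ℕ, 1 ≤ n ∧ T^[n] x ∈ s :=
  conservative_of_box_sequence_general μ T S hT hS hST hTS hpres Y hYmono hYunion hYfin hYlim
end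

section
/- Let C be the circle ℝ/2ℤ equipped with its length (Haar) measure, let X = ℤ × C with the measure μ = (counting measure on ℤ) ⊗ (length measure on C), and let w : ℤ → [0,∞) satisfy w_n → 0 as n → +∞ and as n → −∞. Let T : X → X be a measurable bijection with measurable inverse preserving μ such that for every n ∈ ℤ: μ({z ∈ {n} × C : T(z) ∈ {m} × C}) = 0 whenever |m − n| ≥ 2, μ({z ∈ {n} × C : T(z) ∈ {n+1} × C}) ≤ w_n, and μ({z ∈ {n} × C : T(z) ∈ {n−1} × C}) ≤ w_{n−1}. Then T is conservative with respect to μ: for every measurable set s with μ(s) > 0 there exist x ∈ s and an integer n ≥ 1 with T^n(x) ∈ s. -/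
open MeasureTheory Filter

instance : Fact ((0:ℝ) < 2) := ⟨by norm_num⟩

/-- The measure on the staircase cross-section `X = ℤ × (ℝ/2ℤ)`:
counting measure on the levels times the length (Haar) measure on the circle. -/
noncomputable def staircaseSectionMeasure : Measure (ℤ × AddCircle (2:ℝ)) :=
  (Measure.count : Measure ℤ).prod (volume : Measure (AddCircle (2:ℝ)))

/-!
Suppose no point of `s` ever returns to `s`. Since `T` is invertible, for any subsets `W k ⊆ s`
the images `T^k (W k)` are pairwise disjoint and have the measure of `W k`. Hence, if `s` lies in
a set `A` of finite measure, the points of `s` whose orbit never leaves `A` form a null set, and the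
points leaving `A` do so through the exit set `{z ∈ A | T z ∉ A}`, so `μ s ≤ μ (exit set)`.
For the staircase, `s` may be assumed to lie on one level; taking `A` to be a block of levels
`[M + 1, N]` around it, far enough out that `w N + w M < μ s`, the exit set has measure at most
`w N + w M` because `T` moves points by at most one level, a contradiction.
-/

section NoReturn

open Set Function

variable {α : Type*} {T S : α → α} {s : Set α}

theorem pairwise_disjoint_preimage_iterate_of_not_return (hTS : RightInverse S T)
    (hs : ∀ x ∈ s, ∀ n : ℕ, 1 ≤ n → T^[n] x ∉ s) {W : ℕ → Set α} (hWs : ∀ k, W k ⊆ s) :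
    Pairwise (Disjoint on fun k => S^[k] ⁻¹' W k) := by
  refine (pairwise_disjoint_on _).2 fun j k hjk => disjoint_left.2 fun z hj hk => ?_
  obtain ⟨d, rfl⟩ : ∃ d, k = d + j := ⟨k - j, by omega⟩
  rw [mem_preimage, iterate_add_apply] at hk
  exact hs _ (hWs _ hk) d (by omega) ((hTS.iterate d) _ ▸ hWs j hj)

variable [MeasurableSpace α] {μ : Measure α}

theorem tsum_measure_le_of_mapsTo_iterate (hSμ : MeasurePreserving S μ μ)
    (hTS : RightInverse S T) (hs : ∀ x ∈ s, ∀ n : ℕ, 1 ≤ n → T^[n] x ∉ s)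
    {W : ℕ → Set α} (hWm : ∀ k, MeasurableSet (W k)) (hWs : ∀ k, W k ⊆ s) {B : Set α}
    (hWB : ∀ k, MapsTo T^[k] (W k) B) :
    ∑' k, μ (W k) ≤ μ B :=
  calc ∑' k, μ (W k) = ∑' k, μ (S^[k] ⁻¹' W k) :=
        tsum_congr fun k => ((hSμ.iterate k).measure_preimage (hWm k).nullMeasurableSet).symm
    _ = μ (⋃ k, S^[k] ⁻¹' W k) :=
        (measure_iUnion (pairwise_disjoint_preimage_iterate_of_not_return hTS hs hWs)
          fun k => hSμ.measurable.iterate k (hWm k)).symm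
    _ ≤ μ B := measure_mono <| iUnion_subset fun k z hz => (hTS.iterate k) z ▸ hWB k hz

theorem measure_le_measure_exit_of_not_return (hT : Measurable T)
    (hSμ : MeasurePreserving S μ μ) (hTS : RightInverse S T)
    (hs : ∀ x ∈ s, ∀ n : ℕ, 1 ≤ n → T^[n] x ∉ s) (hsm : MeasurableSet s)
    {A : Set α} (hAm : MeasurableSet A) (hA : μ A ≠ ⊤) (hsA : s ⊆ A) :
    μ s ≤ μ {z ∈ A | T z ∉ A} := by
  set B := {z ∈ A | T z ∉ A}
  set U : ℕ → Set α := fun k => s ∩ T^[k] ⁻¹' B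
  set R : Set α := s ∩ ⋂ k, T^[k] ⁻¹' A
  have hBm : MeasurableSet B := hAm.inter (hT hAm).compl
  have hU : μ (⋃ k, U k) ≤ μ B :=
    (measure_iUnion_le U).trans <| tsum_measure_le_of_mapsTo_iterate hSμ hTS hs
      (fun k => hsm.inter (hT.iterate k hBm)) (fun k => inter_subset_left) fun k _ hx => hx.2
  have hR : μ R = 0 := by
    have hRm : MeasurableSet R := hsm.inter (.iInter fun k => hT.iterate k hAm)
    have : ∑' _ : ℕ, μ R ≤ μ A := tsum_measure_le_of_mapsTo_iterate hSμ hTS hs (fun _ => hRm)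
      (fun _ => inter_subset_left) fun k _ hx => mem_iInter.1 hx.2 k
    by_contra h
    rw [ENNReal.tsum_const_eq_top_of_ne_zero h, top_le_iff] at this
    exact hA this
  -- an orbit that never passes through the exit set stays in `A`
  have hcover : s ⊆ (⋃ k, U k) ∪ R := by
    intro x hx
    by_contra hxUR
    simp only [mem_union, mem_iUnion, not_or, not_exists] at hxUR
    refine hxUR.2 ⟨hx, mem_iInter.2 fun k => ?_⟩
    induction k with
    | zero => exact hsA hx
    | succ k ih =>
      rw [mem_preimage, iterate_succ_apply']
      by_contra hk
      exact hxUR.1 k ⟨hx, ih, hk⟩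
  calc μ s ≤ μ (⋃ k, U k) + μ R := (measure_mono hcover).trans (measure_union_le _ _)
    _ ≤ μ B := by rw [hR, add_zero]; exact hU

end NoReturn

theorem measure_setOf_rel_eq_zero {α ι κ : Type*} [MeasurableSpace α] [Countable ι]
    [Countable κ] {μ : Measure α} (f : α → ι) (g : α → κ) (P : ι → κ → Prop)
    (h : ∀ i j, P i j → μ {z | f z = i ∧ g z = j} = 0) :
    μ {z | P (f z) (g z)} = 0 := by
  refine measure_mono_null (fun z hz => ?_) <|
    measure_iUnion_null fun (p : ι × κ) => measure_iUnion_null fun (hp : P p.1 p.2) => h _ _ hp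
  exact Set.mem_iUnion₂.2 ⟨(f z, g z), hz, rfl, rfl⟩

theorem measure_exit_Icc_le {α : Type*} [MeasurableSpace α] {μ : Measure α} (f g : α → ℤ)
    (hfar : ∀ n m : ℤ, 2 ≤ |m - n| → μ {z | f z = n ∧ g z = m} = 0) (M N : ℤ) :
    μ {z | f z ∈ Set.Icc M N ∧ g z ∉ Set.Icc M N} ≤
      μ {z | f z = N ∧ g z = N + 1} + μ {z | f z = M ∧ g z = M - 1} := by
  have hjump : μ {z | 2 ≤ |g z - f z|} = 0 :=
    measure_setOf_rel_eq_zero f g (fun n m => 2 ≤ |m - n|) hfar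
  calc μ {z | f z ∈ Set.Icc M N ∧ g z ∉ Set.Icc M N}
      ≤ μ ({z | f z = N ∧ g z = N + 1} ∪ {z | f z = M ∧ g z = M - 1} ∪ {z | 2 ≤ |g z - f z|}) :=
        measure_mono fun z ⟨⟨hM, hN⟩, hg⟩ => by
          simp only [Set.mem_Icc, not_and_or, not_le] at hg
          simp only [Set.mem_union, Set.mem_ofPred_eq, le_abs]
          omega
    _ ≤ μ ({z | f z = N ∧ g z = N + 1} ∪ {z | f z = M ∧ g z = M - 1}) +
          μ {z | 2 ≤ |g z - f z|} := measure_union_le _ _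
    _ ≤ _ := by rw [hjump, add_zero]; exact measure_union_le _ _

theorem staircaseSectionMeasure_fst_preimage_ne_top {t : Set ℤ} (ht : t.Finite) :
    staircaseSectionMeasure (Prod.fst ⁻¹' t) ≠ ⊤ := by
  rw [← Set.prod_univ, staircaseSectionMeasure, Measure.prod_prod, AddCircle.measure_univ,
    Measure.count_apply_finite _ ht]
  exact ENNReal.mul_ne_top (ENNReal.natCast_ne_top _) ENNReal.ofReal_ne_top

theorem staircase_return_map_conservative_general
    (w : ℤ → ℝ)
    (hwtop : Tendsto w atTop (nhds 0)) (hwbot : Tendsto w atBot (nhds 0))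
    (T S : ℤ × AddCircle (2:ℝ) → ℤ × AddCircle (2:ℝ))
    (hT : Measurable T) (hS : Measurable S)
    (hST : Function.LeftInverse S T) (hTS : Function.RightInverse S T)
    (hpres : MeasurePreserving T staircaseSectionMeasure staircaseSectionMeasure)
    (hfar : ∀ n m : ℤ, 2 ≤ |m - n| →
      staircaseSectionMeasure {z : ℤ × AddCircle (2:ℝ) | z.1 = n ∧ (T z).1 = m} = 0)
    (hup : ∀ n : ℤ,
      staircaseSectionMeasure {z : ℤ × AddCircle (2:ℝ) | z.1 = n ∧ (T z).1 = n + 1}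
        ≤ ENNReal.ofReal (w n))
    (hdown : ∀ n : ℤ,
      staircaseSectionMeasure {z : ℤ × AddCircle (2:ℝ) | z.1 = n ∧ (T z).1 = n - 1}
        ≤ ENNReal.ofReal (w (n - 1))) :
    ∀ s : Set (ℤ × AddCircle (2:ℝ)), MeasurableSet s → 0 < staircaseSectionMeasure s →
      ∃ x ∈ s, ∃ n : ℕ, 1 ≤ n ∧ T^[n] x ∈ s := by
  intro s hsm hμs
  by_contra hret
  push Not at hret
  set μ := staircaseSectionMeasure
  have hSμ : MeasurePreserving S μ μ :=
    MeasurePreserving.symm ⟨⟨T, S, hST, hTS⟩, hT, hS⟩ hpres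
  obtain ⟨n₀, hn₀⟩ : ∃ n₀ : ℤ, 0 < μ (s ∩ Prod.fst ⁻¹' {n₀}) :=
    exists_measure_pos_of_not_measure_iUnion_null <| by
      simpa [← Set.inter_iUnion, ← Set.preimage_iUnion, Set.iUnion_of_singleton] using hμs.ne'
  set c := μ (s ∩ Prod.fst ⁻¹' {n₀})
  have hsmall : ∀ {l : Filter ℤ}, Tendsto w l (nhds 0) → ∀ᶠ n in l, ENNReal.ofReal (w n) < c / 2 :=
    fun hw => (ENNReal.tendsto_ofReal hw).eventually <| gt_mem_nhds <| by
      simpa using ENNReal.half_pos hn₀.ne'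
  obtain ⟨N, hN, hn₀N⟩ := ((hsmall hwtop).and (eventually_ge_atTop n₀)).exists
  obtain ⟨M, hM, hMn₀⟩ := ((hsmall hwbot).and (eventually_lt_atBot n₀)).exists
  have hexit := measure_le_measure_exit_of_not_return hT hSμ hTS
    (fun x hx n hn hxn => hret x hx.1 n hn hxn.1) (hsm.inter (measurable_fst (.singleton n₀)))
    (measurable_fst measurableSet_Icc) (staircaseSectionMeasure_fst_preimage_ne_top
      (Set.finite_Icc (M + 1) N)) fun z ⟨_, (hz : z.1 = n₀)⟩ => ⟨by omega, by omega⟩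
  refine lt_irrefl c ?_
  calc c ≤ _ := hexit
    _ ≤ _ := measure_exit_Icc_le Prod.fst (fun z => (T z).1) hfar (M + 1) N
    _ ≤ ENNReal.ofReal (w N) + ENNReal.ofReal (w M) :=
        add_le_add (hup N) ((hdown (M + 1)).trans_eq (by rw [add_sub_cancel_right]))
    _ < c / 2 + c / 2 := ENNReal.add_lt_add hN hM
    _ = c := ENNReal.add_halves c

/-- Conservativity of the first return map of the staircase flow when the step
overlaps `w n` tend to `0` as `n → ±∞` (Proposition 3 of the paper). -/
theorem staircase_return_map_conservative
    (w : ℤ → ℝ) (hw0 : ∀ n, 0 ≤ w n)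
    (hwtop : Tendsto w atTop (nhds 0)) (hwbot : Tendsto w atBot (nhds 0))
    (T S : ℤ × AddCircle (2:ℝ) → ℤ × AddCircle (2:ℝ))
    (hT : Measurable T) (hS : Measurable S)
    (hST : Function.LeftInverse S T) (hTS : Function.RightInverse S T)
    (hpres : MeasurePreserving T staircaseSectionMeasure staircaseSectionMeasure)
    (hfar : ∀ n m : ℤ, 2 ≤ |m - n| →
      staircaseSectionMeasure {z : ℤ × AddCircle (2:ℝ) | z.1 = n ∧ (T z).1 = m} = 0)
    (hup : ∀ n : ℤ,
      staircaseSectionMeasure {z : ℤ × AddCircle (2:ℝ) | z.1 = n ∧ (T z).1 = n + 1}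
        ≤ ENNReal.ofReal (w n))
    (hdown : ∀ n : ℤ,
      staircaseSectionMeasure {z : ℤ × AddCircle (2:ℝ) | z.1 = n ∧ (T z).1 = n - 1}
        ≤ ENNReal.ofReal (w (n - 1))) :
    ∀ s : Set (ℤ × AddCircle (2:ℝ)), MeasurableSet s → 0 < staircaseSectionMeasure s →
      ∃ x ∈ s, ∃ n : ℕ, 1 ≤ n ∧ T^[n] x ∈ s :=
  staircase_return_map_conservative_general w hwtop hwbot T S hT hS hST hTS hpres hfar hup hdown
end

section
/- Let K and X be standard Borel spaces, and let T̂ : K → K, T : X → X and j : K → X be Borel maps satisfying j ∘ T̂ = T ∘ j. Assume there is a countable set C ⊆ X such that j is injective on K \ j⁻¹(C). Assume T admits exactly one T-invariant Borel probability measure μ, and that μ has no atoms. Then T̂ admits at most one T̂-invariant Borel probability measure. -/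
open MeasureTheory

/-!
An invariant probability measure `ν` of `T̂` pushes forward under `j` to a `T`-invariant one,
so `j_* ν = μ` by unique ergodicity. Since `μ` has no atoms, the countable set `C` is `μ`-null,
so `ν` lives on `(j ⁻¹' C)ᶜ`, where `j` is injective. By the Lusin–Souslin theorem `j` maps
Borel subsets of this set to Borel sets, hence `ν s = μ (j '' (s \ j ⁻¹' C))` for every Borel `s`.
-/

section

variable {K X : Type*} [MeasurableSpace K] [MeasurableSpace X]

theorem map_apply_preimage_eq_of_semiconj {That : K → K} {T : X → X} {j : K → X}
    (hT : Measurable T) (hj : Measurable j) (hconj : j ∘ That = T ∘ j) {ν : Measure K}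
    (hinv : ∀ s : Set K, MeasurableSet s → ν (That ⁻¹' s) = ν s)
    {s : Set X} (hs : MeasurableSet s) :
    ν.map j (T ⁻¹' s) = ν.map j s := by
  rw [Measure.map_apply hj (hT hs), Measure.map_apply hj hs, ← Set.preimage_comp, ← hconj,
    Set.preimage_comp]
  exact hinv _ (hj hs)

theorem measure_eq_map_image_inter [StandardBorelSpace K] [MeasurableSpace.CountablySeparated X]
    {ν : Measure K} {j : K → X} {A : Set K} (hj : Measurable j) (hA : MeasurableSet A)
    (hinj : Set.InjOn j A) (hνA : ν Aᶜ = 0) {s : Set K} (hs : MeasurableSet s) :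
    ν s = ν.map j (j '' (s ∩ A)) := by
  have himage : MeasurableSet (j '' (s ∩ A)) :=
    (hs.inter hA).image_of_measurable_injOn hj (hinj.mono Set.inter_subset_right)
  calc ν s = ν (s ∩ A) := (measure_inter_conull hνA).symm
    _ = ν (j ⁻¹' (j '' (s ∩ A)) ∩ A) := by
      rw [hinj.preimage_image_inter Set.inter_subset_right]
    _ = ν.map j (j '' (s ∩ A)) := by
      rw [measure_inter_conull hνA, Measure.map_apply hj himage]

theorem MeasureTheory.Measure.ext_of_map_eq_of_injOn [StandardBorelSpace K]
    [MeasurableSpace.CountablySeparated X] {ν₁ ν₂ : Measure K} {j : K → X} {A : Set K}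
    (hj : Measurable j) (hA : MeasurableSet A) (hinj : Set.InjOn j A)
    (h₁ : ν₁ Aᶜ = 0) (h₂ : ν₂ Aᶜ = 0) (hmap : ν₁.map j = ν₂.map j) :
    ν₁ = ν₂ := by
  ext s hs
  rw [measure_eq_map_image_inter hj hA hinj h₁ hs, measure_eq_map_image_inter hj hA hinj h₂ hs,
    hmap]

end

theorem at_most_one_invariant_measure_of_extension_general
    {K X : Type*} [MeasurableSpace K] [StandardBorelSpace K]
    [MeasurableSpace X] [StandardBorelSpace X]
    (That : K → K) (T : X → X) (j : K → X)
    (hT : Measurable T) (hj : Measurable j)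
    (hconj : j ∘ That = T ∘ j)
    (C : Set X) (hC : C.Countable)
    (hinj : Set.InjOn j ((j ⁻¹' C)ᶜ))
    (μ : Measure X)
    (huniq : ∀ ν : Measure X, IsProbabilityMeasure ν →
      (∀ s : Set X, MeasurableSet s → ν (T ⁻¹' s) = ν s) → ν = μ)
    (hatomless : ∀ p : X, μ {p} = 0) :
    ∀ ν₁ ν₂ : Measure K, IsProbabilityMeasure ν₁ → IsProbabilityMeasure ν₂ →
      (∀ s : Set K, MeasurableSet s → ν₁ (That ⁻¹' s) = ν₁ s) →
      (∀ s : Set K, MeasurableSet s → ν₂ (That ⁻¹' s) = ν₂ s) →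
      ν₁ = ν₂ := by
  intro ν₁ ν₂ h₁ h₂ hinv₁ hinv₂
  have hmap : ∀ ν : Measure K, IsProbabilityMeasure ν →
      (∀ s : Set K, MeasurableSet s → ν (That ⁻¹' s) = ν s) → ν.map j = μ := fun ν _ hinv =>
    huniq _ (Measure.isProbabilityMeasure_map hj.aemeasurable)
      fun _ hs => map_apply_preimage_eq_of_semiconj hT hj hconj hinv hs
  have hmap₁ := hmap ν₁ h₁ hinv₁
  have hmap₂ := hmap ν₂ h₂ hinv₂
  have : NullSingletonClass μ := ⟨hatomless⟩
  have hnull : ∀ ν : Measure K, ν.map j = μ → ν (j ⁻¹' C)ᶜᶜ = 0 := fun ν hν => by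
    rw [compl_compl, ← Measure.map_apply hj hC.measurableSet, hν]
    exact hC.measure_zero μ
  exact Measure.ext_of_map_eq_of_injOn hj (hj hC.measurableSet).compl hinj
    (hnull ν₁ hmap₁) (hnull ν₂ hmap₂) (hmap₁.trans hmap₂.symm)

/-- Lemma 9 of the paper's appendix (abstract form): if `j` semiconjugates
`T̂ : K → K` to `T : X → X`, is injective outside the preimage of a countable
set, and `T` is uniquely ergodic with atomless invariant measure, then `T̂`
has at most one invariant Borel probability measure. -/
theorem at_most_one_invariant_measure_of_extension
    {K X : Type*} [MeasurableSpace K] [StandardBorelSpace K]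
    [MeasurableSpace X] [StandardBorelSpace X]
    (That : K → K) (T : X → X) (j : K → X)
    (hThat : Measurable That) (hT : Measurable T) (hj : Measurable j)
    (hconj : j ∘ That = T ∘ j)
    (C : Set X) (hC : C.Countable)
    (hinj : Set.InjOn j ((j ⁻¹' C)ᶜ))
    (μ : Measure X) [IsProbabilityMeasure μ]
    (hinv : ∀ s : Set X, MeasurableSet s → μ (T ⁻¹' s) = μ s)
    (huniq : ∀ ν : Measure X, IsProbabilityMeasure ν →
      (∀ s : Set X, MeasurableSet s → ν (T ⁻¹' s) = ν s) → ν = μ)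
    (hatomless : ∀ p : X, μ {p} = 0) :
    ∀ ν₁ ν₂ : Measure K, IsProbabilityMeasure ν₁ → IsProbabilityMeasure ν₂ →
      (∀ s : Set K, MeasurableSet s → ν₁ (That ⁻¹' s) = ν₁ s) →
      (∀ s : Set K, MeasurableSet s → ν₂ (That ⁻¹' s) = ν₂ s) →
      ν₁ = ν₂ :=
  at_most_one_invariant_measure_of_extension_general That T j hT hj hconj C hC hinj μ huniq
    hatomless
end
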